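/- For λ = α ∉ ℕ and k ∈ ℕ, the Bessel-Fischer pairing on the Fock space F_α satisfies ⟨z₁^k, z₁^k⟩_B = k!·(−α)_k, ⟨z₁^k z₂, z₁^k z₂⟩_B = −k!·(−α)_k, and ⟨z₁^k z₃, z₁^k z₄⟩_B = −⟨z₁^k z₄, z₁^k z₃⟩_B = 2·k!·(−α)_{k+1}, where the Bessel-Fischer product is ⟨p,q⟩_B = p(B) q̄(z)|_{z=0}. -/

import Mathlib

open MvPolynomial

/-- Rising Pochhammer symbol `(a)_n = a(a+1)⋯(a+n-1)`. -/
noncomputable def poch (a : ℂ) (n : ℕ) : ℂ := ∏ j ∈ Finset.range n, (a + j)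

/-- The superpolynomial algebra `ℂ[z₁,z₂] ⊗ Λ(z₃,z₄)` in components: index
`0 ↦` coefficient of `1`, `1 ↦` coefficient of `z₃`, `2 ↦` coefficient of `z₄`,
`3 ↦` coefficient of `z₃z₄`; the even variables are `z₁ = X 0`, `z₂ = X 1`. -/
abbrev SP := Fin 4 → MvPolynomial (Fin 2) ℂ

/-- `B(z₁) = (-α + z₁∂₁ + z₃∂₃ + z₄∂₄)∂₁ - 2αz₂∂₃∂₄` (case `λ = α`). -/
noncomputable def B1 (α : ℂ) (f : SP) : SP :=
  ![C (-α) * pderiv 0 (f 0) + X 0 * pderiv 0 (pderiv 0 (f 0)) + C (2 * α) * X 1 * f 3,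
    C (1 - α) * pderiv 0 (f 1) + X 0 * pderiv 0 (pderiv 0 (f 1)),
    C (1 - α) * pderiv 0 (f 2) + X 0 * pderiv 0 (pderiv 0 (f 2)),
    C (2 - α) * pderiv 0 (f 3) + X 0 * pderiv 0 (pderiv 0 (f 3))]

/-- `B(z₂) = (-1 + z₂∂₂ + z₃∂₃ + z₄∂₄)∂₂ - 2z₁∂₃∂₄`. -/
noncomputable def B2 (α : ℂ) (f : SP) : SP :=
  ![C (-1 : ℂ) * pderiv 1 (f 0) + X 1 * pderiv 1 (pderiv 1 (f 0)) + C 2 * X 0 * f 3,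
    C (0 : ℂ) * pderiv 1 (f 1) + X 1 * pderiv 1 (pderiv 1 (f 1)),
    C (0 : ℂ) * pderiv 1 (f 2) + X 1 * pderiv 1 (pderiv 1 (f 2)),
    C (1 : ℂ) * pderiv 1 (f 3) + X 1 * pderiv 1 (pderiv 1 (f 3))]

/-- `B(z₃) = (-2α + 2z₁∂₁ + 2αz₂∂₂ + 2(1+α)z₃∂₃)∂₄ + z₃∂₁∂₂`. -/
noncomputable def B3 (α : ℂ) (f : SP) : SP :=
  ![C (-2 * α) * f 2 + C 2 * X 0 * pderiv 0 (f 2) + C (2 * α) * X 1 * pderiv 1 (f 2),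
    C (2 * α) * f 3 - C 2 * X 0 * pderiv 0 (f 3) - C (2 * α) * X 1 * pderiv 1 (f 3)
      - C (2 * (1 + α)) * f 3 + pderiv 0 (pderiv 1 (f 0)),
    0,
    pderiv 0 (pderiv 1 (f 2))]

/-- `B(z₄) = (2α - 2z₁∂₁ - 2αz₂∂₂ - 2(1+α)z₄∂₄)∂₃ + z₄∂₁∂₂`. -/
noncomputable def B4 (α : ℂ) (f : SP) : SP :=
  ![C (2 * α) * f 1 - C 2 * X 0 * pderiv 0 (f 1) - C (2 * α) * X 1 * pderiv 1 (f 1),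
    0,
    C (2 * α) * f 3 - C 2 * X 0 * pderiv 0 (f 3) - C (2 * α) * X 1 * pderiv 1 (f 3)
      - C (2 * (1 + α)) * f 3 + pderiv 0 (pderiv 1 (f 0)),
    -pderiv 0 (pderiv 1 (f 1))]

/-- Evaluation at `z = 0` (keeps the purely even component and sets `z₁ = z₂ = 0`). -/
noncomputable def val0 (f : SP) : ℂ := MvPolynomial.eval (fun _ => (0 : ℂ)) (f 0)

/-! On polynomials in `z₁` alone, `B(z₁)` is a lowering operator:
`B(z₁) z₁^(k+1) = (k+1)(k-α) z₁^k`, so `k` applications to `z₁^k` leave `k!(-α)_k`.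
The operators `B(z₂)`, `B(z₃)`, `B(z₄)` send `z₁^k z₂`, `z₁^k z₄`, `z₁^k z₃` to the multiples
`-1`, `2(k-α)`, `-2(k-α)` of `z₁^k`, and `(-α)_k (k-α) = (-α)_(k+1)`. -/

lemma poch_succ (a : ℂ) (n : ℕ) : poch a (n + 1) = poch a n * (a + n) :=
  Finset.prod_range_succ _ _

lemma B1_C_mul_z₁_pow_succ (α c : ℂ) (k : ℕ) :
    B1 α ![C c * X 0 ^ (k + 1), 0, 0, 0]
      = ![C (c * (k + 1) * (k - α)) * X 0 ^ k, 0, 0, 0] := by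
  funext i
  fin_cases i <;> simp [B1]
  cases k with
  | zero => simp; ring
  | succ m => simp; ring

lemma val0_iterate_B1_C_mul_z₁_pow (α c : ℂ) (k : ℕ) :
    val0 ((B1 α)^[k] ![C c * X 0 ^ k, 0, 0, 0]) = c * k.factorial * poch (-α) k := by
  induction k generalizing c with
  | zero => simp [val0, poch]
  | succ k ih =>
    rw [Function.iterate_succ_apply, B1_C_mul_z₁_pow_succ, ih, poch_succ, Nat.factorial_succ]
    push_cast
    ring

lemma B2_z₁_pow_z₂ (α : ℂ) (k : ℕ) :
    B2 α ![X 0 ^ k * X 1, 0, 0, 0] = ![C (-1) * X 0 ^ k, 0, 0, 0] := by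
  funext i
  fin_cases i <;> simp [B2]

lemma B3_z₁_pow_z₄ (α : ℂ) (k : ℕ) :
    B3 α ![0, 0, X 0 ^ k, 0] = ![C (2 * (k - α)) * X 0 ^ k, 0, 0, 0] := by
  funext i
  fin_cases i <;> simp [B3]
  cases k with
  | zero => simp
  | succ m => simp; ring

lemma B4_z₁_pow_z₃ (α : ℂ) (k : ℕ) :
    B4 α ![0, X 0 ^ k, 0, 0] = ![C (-(2 * (k - α))) * X 0 ^ k, 0, 0, 0] := by
  funext i
  fin_cases i <;> simp [B4]
  cases k with
  | zero => simp
  | succ m => simp; ring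

theorem stmt17_general (α : ℂ) (k : ℕ) :
    val0 ((B1 α)^[k] ![X 0 ^ k, 0, 0, 0]) = (Nat.factorial k : ℂ) * poch (-α) k
    ∧ val0 ((B1 α)^[k] (B2 α ![X 0 ^ k * X 1, 0, 0, 0]))
        = -((Nat.factorial k : ℂ) * poch (-α) k)
    ∧ val0 ((B1 α)^[k] (B3 α ![0, 0, X 0 ^ k, 0]))
        = 2 * (Nat.factorial k : ℂ) * poch (-α) (k + 1)
    ∧ val0 ((B1 α)^[k] (B4 α ![0, X 0 ^ k, 0, 0]))
        = -(2 * (Nat.factorial k : ℂ) * poch (-α) (k + 1)) := by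
  refine ⟨?_, ?_, ?_, ?_⟩
  · simpa using val0_iterate_B1_C_mul_z₁_pow α 1 k
  · rw [B2_z₁_pow_z₂, val0_iterate_B1_C_mul_z₁_pow]; ring
  · rw [B3_z₁_pow_z₄, val0_iterate_B1_C_mul_z₁_pow, poch_succ]; ring
  · rw [B4_z₁_pow_z₃, val0_iterate_B1_C_mul_z₁_pow, poch_succ]; ring

/-- Bessel-Fischer pairings on the Fock space `F_α` (`λ = α ∉ ℕ`):
`⟨z₁^k, z₁^k⟩ = k!(-α)_k`, `⟨z₁^k z₂, z₁^k z₂⟩ = -k!(-α)_k`,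
`⟨z₁^k z₃, z₁^k z₄⟩ = -⟨z₁^k z₄, z₁^k z₃⟩ = 2 k!(-α)_{k+1}`,
expressed via `⟨p,q⟩_B = p(B) q̄(z)|_{z=0}`. -/
theorem stmt17 (α : ℂ) (hα : ∀ n : ℕ, α ≠ n) (k : ℕ) :
    val0 ((B1 α)^[k] ![X 0 ^ k, 0, 0, 0]) = (Nat.factorial k : ℂ) * poch (-α) k
    ∧ val0 ((B1 α)^[k] (B2 α ![X 0 ^ k * X 1, 0, 0, 0]))
        = -((Nat.factorial k : ℂ) * poch (-α) k)
    ∧ val0 ((B1 α)^[k] (B3 α ![0, 0, X 0 ^ k, 0]))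
        = 2 * (Nat.factorial k : ℂ) * poch (-α) (k + 1)
    ∧ val0 ((B1 α)^[k] (B4 α ![0, X 0 ^ k, 0, 0]))
        = -(2 * (Nat.factorial k : ℂ) * poch (-α) (k + 1)) :=
  stmt17_general α k
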